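/- Let U₀ > 0, a ≠ 0, c ∈ ℝ, κ > 0 and set U(φ) = U₀·exp(−(a/2)φ² + cφ), λ(φ) = −(√6/κ)·U′(φ)/U(φ), α = 6a/κ². Then: (i) for every φ with aφ ≠ c, Γ(φ) := U″(φ)U(φ)/U′(φ)² = 1 − α/λ(φ)²; (ii) for every φ ∈ ℝ, κφ/√6 = λ(φ)/α + κc/(√6·a). -/

import Mathlib

open Real

/-! Writing `U = U₀ e^{g}` with `g(φ) = -(a/2)φ² + cφ`, one has `U' = g'U` and `U'' = (g'² + g'')U`
with `g' = c - aφ` and `g'' = -a`. Hence `λ = -(√6/κ) g'` is affine in `φ`, which gives (ii), and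
`Γ = 1 + g''/g'² = 1 - a/g'² = 1 - α/λ²`. -/

noncomputable section

def gaussianPotential (U₀ a c φ : ℝ) : ℝ := U₀ * exp (-(a / 2) * φ ^ 2 + c * φ)

end

theorem gaussianPotential_ne_zero {U₀ : ℝ} (hU₀ : U₀ ≠ 0) (a c φ : ℝ) :
    gaussianPotential U₀ a c φ ≠ 0 :=
  mul_ne_zero hU₀ (exp_pos _).ne'

theorem hasDerivAt_gaussianPotential (U₀ a c φ : ℝ) :
    HasDerivAt (gaussianPotential U₀ a c) ((c - a * φ) * gaussianPotential U₀ a c φ) φ := by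
  have hg : HasDerivAt (fun φ : ℝ => -(a / 2) * φ ^ 2 + c * φ) (c - a * φ) φ := by
    refine (((hasDerivAt_pow 2 φ).const_mul (-(a / 2))).add
      ((hasDerivAt_id' φ).const_mul c)).congr_deriv ?_
    push_cast
    ring
  refine (hg.exp.const_mul U₀).congr_deriv ?_
  unfold gaussianPotential
  ring

theorem deriv_gaussianPotential (U₀ a c : ℝ) :
    deriv (gaussianPotential U₀ a c) = fun φ => (c - a * φ) * gaussianPotential U₀ a c φ :=
  funext fun φ => (hasDerivAt_gaussianPotential U₀ a c φ).deriv

theorem deriv_deriv_gaussianPotential (U₀ a c φ : ℝ) :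
    deriv (deriv (gaussianPotential U₀ a c)) φ =
      ((c - a * φ) ^ 2 - a) * gaussianPotential U₀ a c φ := by
  rw [deriv_gaussianPotential]
  have hslope : HasDerivAt (fun φ : ℝ => c - a * φ) (-a) φ := by
    simpa using ((hasDerivAt_id φ).const_mul a).const_sub c
  rw [(hslope.fun_mul (hasDerivAt_gaussianPotential U₀ a c φ)).deriv]
  ring

theorem mul_div_sq_eq_one_sub_div_sq {U U' U'' s a : ℝ} (hU : U ≠ 0) (hs : s ≠ 0)
    (hU' : U' = s * U) (hU'' : U'' = (s ^ 2 - a) * U) :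
    U'' * U / U' ^ 2 = 1 - a / s ^ 2 := by
  subst hU' hU''
  field_simp

theorem gaussian_potential_Gamma_and_z (U₀ a c κ : ℝ)
    (hU₀ : 0 < U₀) (ha : a ≠ 0) (hκ : 0 < κ) :
    let U : ℝ → ℝ := fun φ => U₀ * Real.exp (-(a/2)*φ^2 + c*φ)
    let lam : ℝ → ℝ := fun φ => -(Real.sqrt 6 / κ) * deriv U φ / U φ
    let α : ℝ := 6*a/κ^2
    (∀ φ : ℝ, a*φ ≠ c →
      deriv (deriv U) φ * U φ / (deriv U φ)^2 = 1 - α/(lam φ)^2) ∧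
    (∀ φ : ℝ, κ*φ/Real.sqrt 6 = lam φ/α + κ*c/(Real.sqrt 6 * a)) := by
  intro U lam α
  have hU : ∀ φ, U φ ≠ 0 := gaussianPotential_ne_zero hU₀.ne' a c
  have hU' : deriv U = fun φ => (c - a * φ) * U φ := deriv_gaussianPotential U₀ a c
  have hU'' : ∀ φ, deriv (deriv U) φ = ((c - a * φ) ^ 2 - a) * U φ :=
    deriv_deriv_gaussianPotential U₀ a c
  have hlam : ∀ φ, lam φ = -(√6 / κ) * (c - a * φ) := fun φ => by
    change -(√6 / κ) * deriv U φ / U φ = _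
    rw [hU']
    field_simp [hU φ]
  have hsqrt6 : √6 ^ 2 = 6 := sq_sqrt (by norm_num)
  simp only [α]
  refine ⟨fun φ hφ => ?_, fun φ => ?_⟩
  · have hslope : c - a * φ ≠ 0 := sub_ne_zero.mpr (Ne.symm hφ)
    have hαlam : 6 * a / κ ^ 2 / lam φ ^ 2 = a / (c - a * φ) ^ 2 := by
      rw [hlam]
      field_simp
      exact hsqrt6.symm
    rw [hαlam]
    exact mul_div_sq_eq_one_sub_div_sq (hU φ) hslope (congrFun hU' φ) (hU'' φ)
  · rw [hlam]
    field_simp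
    rw [hsqrt6]
    ring
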